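/- arXiv:2310.14043 — 6 statements merged into one kernel-verified Lean document; each statement's English description precedes it below -/
import Mathlib

section
/- An n × n doubly stochastic matrix D satisfies tr_min(D) = 1 if and only if D = J_n, the matrix all of whose entries equal 1/n. -/
open Matrix BigOperators

/-- The matrix `J_n` with all entries equal to `1/n`. -/
noncomputable def matJ (n : ℕ) : Matrix (Fin n) (Fin n) ℝ :=
  Matrix.of fun _ _ => (n : ℝ)⁻¹

/-- The singular values of a real square matrix: the square roots of the
eigenvalues of `Aᴴ * A` (`Aᴴ = Aᵀ` over `ℝ`). -/
noncomputable def singularValues {n : ℕ} (A : Matrix (Fin n) (Fin n) ℝ) : Fin n → ℝ :=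
  fun i => Real.sqrt ((Matrix.isHermitian_conjTranspose_mul_self A).eigenvalues i)

/-- The Schatten `p`-norm of a real square matrix. -/
noncomputable def schattenNorm {n : ℕ} (p : ℝ) (A : Matrix (Fin n) (Fin n) ℝ) : ℝ :=
  (∑ i, singularValues A i ^ p) ^ (1 / p)

/-- The Frobenius norm of a real square matrix. -/
noncomputable def frobNorm {n : ℕ} (A : Matrix (Fin n) (Fin n) ℝ) : ℝ :=
  Real.sqrt (∑ i, ∑ j, (A i j) ^ 2)

/-- The minimal trace of a square matrix: the minimum over all permutations `σ`
of `∑ i, A i (σ i)`. -/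
noncomputable def trMin {n : ℕ} (A : Matrix (Fin n) (Fin n) ℝ) : ℝ :=
  ⨅ σ : Equiv.Perm (Fin n), ∑ i, A i (σ i)

/-- A matrix is a permutation matrix if it is the matrix of some permutation. -/
def IsPermMatrix {n : ℕ} (P : Matrix (Fin n) (Fin n) ℝ) : Prop :=
  ∃ σ : Equiv.Perm (Fin n), P = σ.permMatrix ℝ

/-! If `tr_min D = 1`, every permutation sum of `D` is at least `1`, while the `n` cyclic shifts
`i ↦ τ i + m` of a permutation `τ` meet every entry exactly once, so their sums add up to `n`.
Hence all permutation sums of `D` equal `1`. Comparing `σ` with `σ ∘ (i k)` then gives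
`D i j + D k l = D i l + D k j`; summing over `l` shows that every column is constant,
and the column sums force that constant to be `1/n`. -/

open Finset Equiv

theorem Equiv.Perm.exists_apply_eq_and_apply_eq {ι : Type*} [DecidableEq ι] {i k j l : ι}
    (hik : i ≠ k) (hjl : j ≠ l) : ∃ σ : Perm ι, σ i = j ∧ σ k = l := by
  have hk : swap i j k ≠ j := fun h =>
    hik ((swap i j).injective (h.trans (swap_apply_left i j).symm)).symm
  refine ⟨(swap i j).trans (swap l (swap i j k)), ?_, swap_apply_right _ _⟩
  rw [trans_apply, swap_apply_left]
  exact swap_apply_of_ne_of_ne hjl hk.symm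

namespace Matrix

variable {ι : Type*} [Fintype ι] [DecidableEq ι]

theorem add_eq_add_of_forall_perm_sum_eq {D : Matrix ι ι ℝ} {c : ℝ}
    (hD : ∀ σ : Perm ι, ∑ i, D i (σ i) = c) (i k j l : ι) :
    D i j + D k l = D i l + D k j := by
  rcases eq_or_ne i k with rfl | hik
  · ring
  rcases eq_or_ne j l with rfl | hjl
  · ring
  obtain ⟨σ, hσi, hσk⟩ := Perm.exists_apply_eq_and_apply_eq hik hjl
  have hdiff : ∑ x, (D x ((Equiv.swap i k).trans σ x) - D x (σ x))
      = (D i l - D i j) + (D k j - D k l) := by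
    rw [Fintype.sum_eq_add i k hik fun x hx => by
      rw [trans_apply, Equiv.swap_apply_of_ne_of_ne hx.1 hx.2, sub_self]]
    simp [hσi, hσk]
  rw [sum_sub_distrib, hD ((Equiv.swap i k).trans σ), hD σ, sub_self] at hdiff
  linarith

theorem apply_eq_inv_card_of_forall_perm_sum_eq {D : Matrix ι ι ℝ} {c : ℝ}
    (hD : D ∈ doublyStochastic ℝ ι) (hc : ∀ σ : Perm ι, ∑ i, D i (σ i) = c) (i j : ι) :
    D i j = (Fintype.card ι : ℝ)⁻¹ := by
  obtain ⟨-, hrow, hcol⟩ := mem_doublyStochastic_iff_sum.1 hD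
  have : Nonempty ι := ⟨i⟩
  have hcard : (Fintype.card ι : ℝ) ≠ 0 := Nat.cast_ne_zero.2 Fintype.card_ne_zero
  have hcol_const : ∀ k, D k j = D i j := fun k => by
    have := sum_congr rfl fun l (_ : l ∈ univ) => add_eq_add_of_forall_perm_sum_eq hc i k j l
    simp only [sum_add_distrib, sum_const, card_univ, nsmul_eq_mul, hrow] at this
    exact (mul_left_cancel₀ hcard (by linarith)).symm
  have := hcol j
  simp only [hcol_const, sum_const, card_univ, nsmul_eq_mul] at this
  exact eq_inv_of_mul_eq_one_right this

theorem sum_perm_sum_add_right {G : Type*} [AddGroup G] [Fintype G] (D : Matrix G G ℝ)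
    (τ : Perm G) : ∑ m, ∑ i, D i (τ i + m) = ∑ i, ∑ j, D i j := by
  rw [sum_comm]
  exact sum_congr rfl fun i _ => Equiv.sum_comp (Equiv.addLeft (τ i)) (D i)

end Matrix

theorem trMin_le {n : ℕ} (A : Matrix (Fin n) (Fin n) ℝ) (σ : Perm (Fin n)) :
    trMin A ≤ ∑ i, A i (σ i) :=
  ciInf_le (Set.finite_range _).bddBelow σ

theorem perm_sum_eq_one_of_trMin_eq_one {n : ℕ} [NeZero n] {D : Matrix (Fin n) (Fin n) ℝ}
    (hD : D ∈ doublyStochastic ℝ (Fin n)) (h : trMin D = 1) (τ : Perm (Fin n)) :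
    ∑ i, D i (τ i) = 1 := by
  have hge : ∀ m ∈ univ, (1 : ℝ) ≤ ∑ i, D i (τ i + m) := fun m _ =>
    h ▸ trMin_le D (τ.trans (Equiv.addRight m))
  have htotal : ∑ _m : Fin n, (1 : ℝ) = ∑ m, ∑ i, D i (τ i + m) := by
    simp [sum_perm_sum_add_right, (mem_doublyStochastic_iff_sum.1 hD).2.1]
  simpa using ((sum_eq_sum_iff_of_le hge).1 htotal 0 (mem_univ 0)).symm

theorem trMin_matJ {n : ℕ} (hn : 0 < n) : trMin (matJ n) = 1 := by
  have hconst : ∀ σ : Perm (Fin n), ∑ i, matJ n i (σ i) = 1 := fun σ => by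
    simp [matJ, hn.ne']
  simp only [trMin, hconst, ciInf_const]

/-- An `n × n` doubly stochastic matrix `D` satisfies `tr_min(D) = 1`
iff `D = J_n`. -/
theorem trMin_eq_one_iff_eq_matJ {n : ℕ} (hn : 0 < n) (D : Matrix (Fin n) (Fin n) ℝ)
    (hD : D ∈ doublyStochastic ℝ (Fin n)) :
    trMin D = 1 ↔ D = matJ n := by
  have : NeZero n := ⟨hn.ne'⟩
  constructor
  · intro h
    ext i j
    simpa [matJ] using
      apply_eq_inv_card_of_forall_perm_sum_eq hD (perm_sum_eq_one_of_trMin_eq_one hD h) i j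
  · rintro rfl
    exact trMin_matJ hn
end

section
/- Let 1 ≤ p < ∞ and let D be an n × n doubly stochastic matrix. Then 1 ≤ ‖D‖_{S_p}, and equality ‖D‖_{S_p} = 1 holds if and only if D = J_n, the matrix all of whose entries equal 1/n. -/
/-!
`Dᵀ * D` is again doubly stochastic, so it fixes the all-ones vector: `1` is an eigenvalue of
`Dᵀ * D`, i.e. `1` is a singular value of `D`, and `∑ σᵢ ^ p ≥ 1`. Equality forces every other
singular value to vanish, i.e. `∑ σᵢ ^ 2 = tr (Dᵀ * D) = ∑ᵢⱼ Dᵢⱼ ^ 2 = 1`. As the rows of `D` sum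
to `1`, `∑ᵢⱼ (Dᵢⱼ - 1/n) ^ 2 = ∑ᵢⱼ Dᵢⱼ ^ 2 - 1`, which vanishes exactly when `D = J_n`.
-/

open Matrix BigOperators

theorem Fintype.sum_eq_one_iff_of_nonneg {ι : Type*} [Fintype ι] {x : ι → ℝ}
    (hx : ∀ i, 0 ≤ x i) {i₀ : ι} (hi₀ : x i₀ = 1) :
    ∑ i, x i = 1 ↔ ∀ i ≠ i₀, x i = 0 := by
  classical
  rw [Fintype.sum_eq_add_sum_compl i₀, hi₀, add_eq_left,
    Finset.sum_eq_zero_iff_of_nonneg fun i _ => hx i]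
  simp

namespace Matrix

variable {ι : Type*} [Fintype ι] [DecidableEq ι]

theorem IsHermitian.exists_eigenvalues_eq_of_mulVec_eq_smul {A : Matrix ι ι ℝ}
    (hA : A.IsHermitian) {v : ι → ℝ} {μ : ℝ} (hv : v ≠ 0) (hAv : A *ᵥ v = μ • v) :
    ∃ i, hA.eigenvalues i = μ := by
  have hμ : Module.End.HasEigenvalue (toLin' A) μ :=
    Module.End.hasEigenvalue_of_hasEigenvector
      ⟨by simpa [Module.End.mem_genEigenspace_one] using hAv, hv⟩
  have hμ' := hμ.mem_spectrum
  rwa [spectrum_toLin', hA.spectrum_real_eq_range_eigenvalues] at hμ'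

theorem sum_eigenvalues_conjTranspose_mul_self (A : Matrix ι ι ℝ) :
    ∑ i, (isHermitian_conjTranspose_mul_self A).eigenvalues i = ∑ i, ∑ j, A i j ^ 2 := by
  have htrace := (isHermitian_conjTranspose_mul_self A).trace_eq_sum_eigenvalues
  simp only [RCLike.ofReal_real_eq_id, id] at htrace
  rw [← htrace, Finset.sum_comm]
  simp [trace, mul_apply, sq]

theorem exists_eigenvalues_conjTranspose_mul_self_eq_one [Nonempty ι] {D : Matrix ι ι ℝ}
    (hD : D ∈ doublyStochastic ℝ ι) :
    ∃ i, (isHermitian_conjTranspose_mul_self D).eigenvalues i = 1 := by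
  have hM : Dᴴ * D ∈ doublyStochastic ℝ ι := by
    rw [conjTranspose_eq_transpose_of_trivial]
    exact mul_mem (transpose_mem_doublyStochastic_iff.mpr hD) hD
  refine (isHermitian_conjTranspose_mul_self D).exists_eigenvalues_eq_of_mulVec_eq_smul
    one_ne_zero ?_
  rw [one_smul, mulVec_one_of_mem_doublyStochastic hM]

end Matrix

section

variable {n : ℕ}

theorem singularValues_nonneg (A : Matrix (Fin n) (Fin n) ℝ) (i : Fin n) :
    0 ≤ singularValues A i :=
  Real.sqrt_nonneg _

theorem exists_singularValues_eq_one (hn : 0 < n) {D : Matrix (Fin n) (Fin n) ℝ}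
    (hD : D ∈ doublyStochastic ℝ (Fin n)) : ∃ i, singularValues D i = 1 := by
  have : Nonempty (Fin n) := Fin.pos_iff_nonempty.mp hn
  obtain ⟨i, hi⟩ := exists_eigenvalues_conjTranspose_mul_self_eq_one hD
  exact ⟨i, by rw [singularValues, hi, Real.sqrt_one]⟩

theorem one_le_schattenNorm {p : ℝ} (hp : 0 < p) {A : Matrix (Fin n) (Fin n) ℝ} {i₀ : Fin n}
    (hi₀ : singularValues A i₀ = 1) : 1 ≤ schattenNorm p A := by
  refine Real.one_le_rpow ?_ (by positivity)
  calc 1 = singularValues A i₀ ^ p := by rw [hi₀, Real.one_rpow]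
    _ ≤ ∑ i, singularValues A i ^ p :=
      Finset.single_le_sum (f := fun i => singularValues A i ^ p)
        (fun i _ => Real.rpow_nonneg (singularValues_nonneg A i) p) (Finset.mem_univ i₀)

theorem schattenNorm_eq_one_iff {p : ℝ} (hp : 0 < p) {A : Matrix (Fin n) (Fin n) ℝ}
    {i₀ : Fin n} (hi₀ : singularValues A i₀ = 1) :
    schattenNorm p A = 1 ↔ ∑ i, ∑ j, A i j ^ 2 = 1 := by
  have heig := eigenvalues_conjTranspose_mul_self_nonneg A
  have hσp : ∀ i, 0 ≤ singularValues A i ^ p :=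
    fun i => Real.rpow_nonneg (singularValues_nonneg A i) p
  calc schattenNorm p A = 1 ↔ ∑ i, singularValues A i ^ p = 1 := by
        rw [schattenNorm, one_div,
          Real.rpow_inv_eq (Finset.sum_nonneg fun i _ => hσp i) zero_le_one hp.ne', Real.one_rpow]
    _ ↔ ∀ i ≠ i₀, singularValues A i ^ p = 0 :=
        Fintype.sum_eq_one_iff_of_nonneg hσp (by rw [hi₀, Real.one_rpow])
    _ ↔ ∀ i ≠ i₀, (isHermitian_conjTranspose_mul_self A).eigenvalues i = 0 := by
        simp only [singularValues, Real.rpow_eq_zero (Real.sqrt_nonneg _) hp.ne',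
          Real.sqrt_eq_zero (heig _)]
    _ ↔ ∑ i, ∑ j, A i j ^ 2 = 1 := by
        rw [← sum_eigenvalues_conjTranspose_mul_self,
          Fintype.sum_eq_one_iff_of_nonneg heig (Real.sqrt_eq_one.mp hi₀)]

theorem sum_sq_sub_matJ (hn : 0 < n) {A : Matrix (Fin n) (Fin n) ℝ}
    (hA : ∀ i, ∑ j, A i j = 1) :
    ∑ i, ∑ j, (A i j - matJ n i j) ^ 2 = ∑ i, ∑ j, A i j ^ 2 - 1 := by
  have hn₀ : (n : ℝ) ≠ 0 := by positivity
  simp only [matJ, of_apply, sub_sq, Finset.sum_add_distrib, Finset.sum_sub_distrib,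
    ← Finset.sum_mul, ← Finset.mul_sum, hA, Finset.sum_const, Finset.card_univ,
    Fintype.card_fin, nsmul_eq_mul]
  field_simp
  ring

theorem eq_matJ_iff_sum_sq_eq_one (hn : 0 < n) {A : Matrix (Fin n) (Fin n) ℝ}
    (hA : ∀ i, ∑ j, A i j = 1) :
    A = matJ n ↔ ∑ i, ∑ j, A i j ^ 2 = 1 := by
  rw [← sub_eq_zero (b := (1 : ℝ)), ← sum_sq_sub_matJ hn hA, ← Matrix.ext_iff]
  simp [Finset.sum_eq_zero_iff_of_nonneg, sq_nonneg, Finset.sum_nonneg, sub_eq_zero]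

end

/-- For `1 ≤ p < ∞` and `D` doubly stochastic, `1 ≤ ‖D‖_{S_p}`, with
equality iff `D = J_n`. -/
theorem one_le_schattenNorm_doublyStochastic {n : ℕ} (hn : 0 < n) {p : ℝ} (hp : 1 ≤ p)
    (D : Matrix (Fin n) (Fin n) ℝ) (hD : D ∈ doublyStochastic ℝ (Fin n)) :
    1 ≤ schattenNorm p D ∧ (schattenNorm p D = 1 ↔ D = matJ n) := by
  have hp₀ : 0 < p := by linarith
  obtain ⟨i₀, hi₀⟩ := exists_singularValues_eq_one hn hD
  exact ⟨one_le_schattenNorm hp₀ hi₀, (schattenNorm_eq_one_iff hp₀ hi₀).trans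
    (eq_matJ_iff_sum_sq_eq_one hn (sum_row_of_mem_doublyStochastic hD)).symm⟩
end

section
/- For every n × n doubly stochastic matrix D, the minimal radius r_F(D) = max_{D' ∈ Ω_n} ‖D − D'‖_F of a bounding ball of Ω_n centered at D relative to the Frobenius norm satisfies ( ‖D‖_F² + n − 2 )^{1/2} ≤ r_F(D) ≤ ( ‖D‖_F² + n )^{1/2}. -/
open Matrix BigOperators Finset

/-!
Expanding the square, `‖D - D'‖_F² = ‖D‖_F² - 2⟨D, D'⟩ + ‖D'‖_F²`. For `D'` doubly stochastic,
`⟨D, D'⟩ ≥ 0` and `‖D'‖_F² ≤ ∑ D'ᵢⱼ = n`, giving the upper bound. For the lower bound take `D'`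
a permutation matrix, so `‖D'‖_F² = n`: the `n` cyclic shift permutations have
`⟨D, P_k⟩` summing to `∑ Dᵢⱼ = n`, so one of them has `⟨D, P_k⟩ ≤ 1`.
-/

lemma frobNorm_nonneg {n : ℕ} (A : Matrix (Fin n) (Fin n) ℝ) : 0 ≤ frobNorm A :=
  Real.sqrt_nonneg _

lemma frobNorm_sq {n : ℕ} (A : Matrix (Fin n) (Fin n) ℝ) :
    frobNorm A ^ 2 = ∑ i, ∑ j, A i j ^ 2 :=
  Real.sq_sqrt (by positivity)

lemma frobNorm_sub_sq_le {n : ℕ} {D D' : Matrix (Fin n) (Fin n) ℝ} (hD : ∀ i j, 0 ≤ D i j)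
    (hD' : D' ∈ doublyStochastic ℝ (Fin n)) :
    frobNorm (D - D') ^ 2 ≤ frobNorm D ^ 2 + n := by
  have entry_le (i j : Fin n) : (D i j - D' i j) ^ 2 ≤ D i j ^ 2 + D' i j := by
    have := hD i j
    have := nonneg_of_mem_doublyStochastic hD' (i := i) (j := j)
    have := le_one_of_mem_doublyStochastic hD' (i := i) (j := j)
    nlinarith
  calc frobNorm (D - D') ^ 2 ≤ ∑ i, ∑ j, (D i j ^ 2 + D' i j) := by
        rw [frobNorm_sq]
        exact sum_le_sum fun i _ => sum_le_sum fun j _ => entry_le i j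
    _ = frobNorm D ^ 2 + n := by
        simp only [sum_add_distrib, sum_row_of_mem_doublyStochastic hD', frobNorm_sq]
        simp

lemma frobNorm_sub_permMatrix_sq {n : ℕ} (A : Matrix (Fin n) (Fin n) ℝ) (σ : Equiv.Perm (Fin n)) :
    frobNorm (A - σ.permMatrix ℝ) ^ 2 = frobNorm A ^ 2 - 2 * ∑ i, A i (σ i) + n := by
  have row_eq (i : Fin n) :
      ∑ j, (A i j - σ.permMatrix ℝ i j) ^ 2 = ∑ j, A i j ^ 2 - 2 * A i (σ i) + 1 := by
    have entry_eq (j : Fin n) : (A i j - σ.permMatrix ℝ i j) ^ 2 =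
        A i j ^ 2 - (if σ i = j then 2 * A i j - 1 else 0) := by
      by_cases h : σ i = j
      · simp [PEquiv.toMatrix_apply, h]
        ring
      · simp [PEquiv.toMatrix_apply, h]
    simp only [entry_eq, sum_sub_distrib, sum_ite_eq, mem_univ, if_true]
    ring
  simp only [frobNorm_sq, Matrix.sub_apply, row_eq, sum_add_distrib, sum_sub_distrib, ← mul_sum]
  simp

lemma exists_perm_sum_apply_le_one {n : ℕ} (D : Matrix (Fin n) (Fin n) ℝ)
    (hrow : ∀ i, ∑ j, D i j = 1) : ∃ σ : Equiv.Perm (Fin n), ∑ i, D i (σ i) ≤ 1 := by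
  cases n with
  | zero => exact ⟨1, by simp⟩
  | succ m =>
    have shifts_sum : ∑ k : Fin (m + 1), ∑ i, D i (Equiv.addRight k i) = ∑ _k : Fin (m + 1), 1 := by
      rw [sum_comm]
      refine sum_congr rfl fun i _ => ?_
      rw [← hrow i]
      exact Fintype.sum_equiv (Equiv.addLeft i) _ _ fun k => rfl
    obtain ⟨k, -, hk⟩ := exists_le_of_sum_le univ_nonempty shifts_sum.le
    exact ⟨Equiv.addRight k, hk⟩

/-- For `D` doubly stochastic,
`(‖D‖_F² + n − 2)^{1/2} ≤ r_F(D) ≤ (‖D‖_F² + n)^{1/2}` where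
`r_F(D) = max_{D' ∈ Ω_n} ‖D − D'‖_F`. -/
theorem frob_bounding_radius_bounds {n : ℕ} (D : Matrix (Fin n) (Fin n) ℝ)
    (hD : D ∈ doublyStochastic ℝ (Fin n)) :
    Real.sqrt (frobNorm D ^ 2 + n - 2) ≤
        sSup {r : ℝ | ∃ D' ∈ doublyStochastic ℝ (Fin n), r = frobNorm (D - D')} ∧
      sSup {r : ℝ | ∃ D' ∈ doublyStochastic ℝ (Fin n), r = frobNorm (D - D')} ≤
        Real.sqrt (frobNorm D ^ 2 + n) := by
  set S := {r : ℝ | ∃ D' ∈ doublyStochastic ℝ (Fin n), r = frobNorm (D - D')}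
  have upper : ∀ r ∈ S, r ≤ Real.sqrt (frobNorm D ^ 2 + n) := by
    rintro _ ⟨D', hD', rfl⟩
    rw [Real.le_sqrt (frobNorm_nonneg _) (by positivity)]
    exact frobNorm_sub_sq_le (fun _ _ => nonneg_of_mem_doublyStochastic hD) hD'
  refine ⟨?_, csSup_le ⟨_, D, hD, rfl⟩ upper⟩
  obtain ⟨σ, hσ⟩ := exists_perm_sum_apply_le_one D (sum_row_of_mem_doublyStochastic hD)
  have lower : Real.sqrt (frobNorm D ^ 2 + n - 2) ≤ frobNorm (D - σ.permMatrix ℝ) := by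
    rw [Real.sqrt_le_left (frobNorm_nonneg _), frobNorm_sub_permMatrix_sq]
    linarith
  exact lower.trans (le_csSup ⟨_, upper⟩ ⟨_, permMatrix_mem_doublyStochastic, rfl⟩)
end

section
/- Let n ≥ 2 and let A be an n × n real matrix such that ‖A − P‖_{S_1} = n − 1 for every n × n permutation matrix P. Then A = J_n. -/
/-!
By trace duality, `tr ((A - P)ᵀ Q) ≤ ‖A - P‖_{S_1}` for every orthogonal `Q`. Testing the
hypothesis against `Q = -P_σ H`, with `H = 1` and with Householder reflections `H`, shows that every
permutation sum `t_σ = ∑ i, A i (σ i)` is at least `1` and that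
`2 uᵀ (Aᵀ P_σ) u ≤ (1 + t_σ) ‖u‖²`. At `u = 1`, averaged over the cyclic shifts `i ↦ σ (i + k)`
(which cover every entry exactly once), this forces the total sum of `A` to be `n` and `t_σ = 1`.
Then the quadratic form of `Aᵀ P_σ - 1` is nonpositive and vanishes at `1`, so `1` is a critical
point: row sum `i` plus column sum `σ i` equals `2`. Since `t_σ` is constant, exchanging two values
of `σ` does not change it, and summing the resulting exchange relation shows that the same quantity
equals `n * A i (σ i) + 1`. Hence every entry is `1 / n`.
-/

open Matrix BigOperators

lemma trace_transpose_mul_le_sum_sqrt {m ι : Type*} [Fintype m] [Fintype ι]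
    (X Y : Matrix m ι ℝ) :
    trace (Xᵀ * Y) ≤ ∑ k, √((Xᵀ * X) k k) * √((Yᵀ * Y) k k) := by
  simp only [trace, diag, mul_apply, transpose_apply, ← sq]
  gcongr with k
  exact Real.sum_mul_le_sqrt_mul_sqrt _ _ _

theorem trace_transpose_mul_le_sum_singularValues {n : ℕ} (B Q : Matrix (Fin n) (Fin n) ℝ)
    (hQ : Q ∈ orthogonalGroup (Fin n) ℝ) :
    trace (Bᵀ * Q) ≤ ∑ i, singularValues B i := by
  set hH := isHermitian_conjTranspose_mul_self B
  set U : Matrix (Fin n) (Fin n) ℝ := (hH.eigenvectorUnitary : Matrix (Fin n) (Fin n) ℝ)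
  have hU : U ∈ orthogonalGroup (Fin n) ℝ := hH.eigenvectorUnitary.2
  have hBU : (B * U)ᵀ * (B * U) = diagonal hH.eigenvalues := by
    have := hH.conjStarAlgAut_star_eigenvectorUnitary
    rw [Unitary.conjStarAlgAut_star_apply, star_eq_conjTranspose] at this
    convert this using 1
    · simp [U, Matrix.mul_assoc, conjTranspose_eq_transpose_of_trivial]
    · simp
  have hQU : (Q * U)ᵀ * (Q * U) = 1 := by
    rw [transpose_mul, Matrix.mul_assoc, ← Matrix.mul_assoc Qᵀ,
      (mem_orthogonalGroup_iff' _ _).mp hQ, Matrix.one_mul, (mem_orthogonalGroup_iff' _ _).mp hU]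
  calc trace (Bᵀ * Q) = trace ((B * U)ᵀ * (Q * U)) := by
        rw [transpose_mul, Matrix.mul_assoc, trace_mul_comm Uᵀ, Matrix.mul_assoc, Matrix.mul_assoc,
          (mem_orthogonalGroup_iff _ _).mp hU, Matrix.mul_one]
    _ ≤ ∑ k, √(((B * U)ᵀ * (B * U)) k k) * √(((Q * U)ᵀ * (Q * U)) k k) :=
        trace_transpose_mul_le_sum_sqrt _ _
    _ = ∑ i, singularValues B i := by
        rw [hBU, hQU]
        simp [singularValues]

section Orthogonal

variable {ι : Type*} [Fintype ι] [DecidableEq ι]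

noncomputable def householder (u : ι → ℝ) : Matrix ι ι ℝ := 1 - (2 / (u ⬝ᵥ u)) • vecMulVec u u

lemma householder_mem_orthogonalGroup {u : ι → ℝ} (hu : u ≠ 0) :
    householder u ∈ orthogonalGroup ι ℝ := by
  have huu : u ⬝ᵥ u ≠ 0 := dotProduct_self_eq_zero.not.mpr hu
  rw [mem_orthogonalGroup_iff', householder, transpose_sub, transpose_one, transpose_smul,
    transpose_vecMulVec, sub_mul, mul_sub, mul_sub, Matrix.one_mul, Matrix.mul_one, Matrix.one_mul,
    smul_mul_smul, vecMulVec_mul_vecMulVec, vecMulVec_smul, smul_smul]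
  have : 2 / (u ⬝ᵥ u) * (2 / (u ⬝ᵥ u)) * (u ⬝ᵥ u) = 2 * (2 / (u ⬝ᵥ u)) := by
    field_simp
  rw [this, mul_smul, two_smul]
  abel

lemma trace_mul_householder (X : Matrix ι ι ℝ) (u : ι → ℝ) :
    trace (X * householder u) = trace X - 2 / (u ⬝ᵥ u) * (u ⬝ᵥ (X *ᵥ u)) := by
  rw [householder, mul_sub, Matrix.mul_one, trace_sub, Matrix.mul_smul, trace_smul, mul_vecMulVec,
    trace_vecMulVec, dotProduct_comm (X *ᵥ u), smul_eq_mul]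

lemma permMatrix_mem_orthogonalGroup (σ : Equiv.Perm ι) :
    σ.permMatrix ℝ ∈ orthogonalGroup ι ℝ := by
  rw [mem_orthogonalGroup_iff', transpose_permMatrix, ← permMatrix_mul, mul_inv_cancel,
    permMatrix_one]

lemma trace_transpose_mul_permMatrix (A : Matrix ι ι ℝ) (σ : Equiv.Perm ι) :
    trace (Aᵀ * σ.permMatrix ℝ) = ∑ i, A i (σ i) := by
  rw [← trace_transpose, transpose_mul, transpose_transpose, transpose_permMatrix,
    PEquiv.toMatrix_toPEquiv_mul, ← Equiv.sum_comp σ⁻¹ fun i => A i (σ i)]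
  simp [trace]

end Orthogonal

lemma eq_zero_of_forall_mul_add_mul_sq_nonpos {b c : ℝ} (h : ∀ t : ℝ, b * t + c * t ^ 2 ≤ 0) :
    b = 0 := by
  have hc : 1 - c ≠ 0 := by linarith [h 1, h (-1)]
  have hsq : b * (b / (1 - c)) + c * (b / (1 - c)) ^ 2 = (b / (1 - c)) ^ 2 := by
    field_simp
    ring
  have ht := h (b / (1 - c))
  rw [hsq] at ht
  have := pow_eq_zero_iff two_ne_zero |>.mp (le_antisymm ht (sq_nonneg _))
  exact (div_eq_zero_iff.mp this).resolve_right hc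

lemma add_transpose_mulVec_eq_zero_of_dotProduct_mulVec_nonpos {ι : Type*} [Fintype ι]
    {M : Matrix ι ι ℝ} (hM : ∀ u, u ⬝ᵥ (M *ᵥ u) ≤ 0) {x : ι → ℝ} (hx : x ⬝ᵥ (M *ᵥ x) = 0) :
    (M + Mᵀ) *ᵥ x = 0 := by
  have hv : ∀ v, v ⬝ᵥ ((M + Mᵀ) *ᵥ x) = 0 := fun v =>
    eq_zero_of_forall_mul_add_mul_sq_nonpos (c := v ⬝ᵥ (M *ᵥ v)) fun t => by
      have := hM (x + t • v)
      simp only [mulVec_add, mulVec_smul, add_dotProduct, dotProduct_add, smul_dotProduct,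
        dotProduct_smul, hx, add_mulVec, mulVec_transpose, smul_eq_mul] at this ⊢
      rw [dotProduct_comm v (x ᵥ* M), ← dotProduct_mulVec]
      linarith
  exact dotProduct_self_eq_zero.mp (hv _)

section PermutationSums

variable {ι : Type*} [Fintype ι] [DecidableEq ι] {A : Matrix ι ι ℝ} {c : ℝ}

lemma apply_perm_add_apply_perm_eq_of_forall_sum_apply_perm_eq
    (hA : ∀ σ : Equiv.Perm ι, ∑ i, A i (σ i) = c) (σ : Equiv.Perm ι) (i k : ι) :
    A i (σ k) + A k (σ i) = A i (σ i) + A k (σ k) := by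
  rcases eq_or_ne i k with rfl | hik
  · rfl
  have hdiff : ∑ x, (A x ((σ * Equiv.swap i k) x) - A x (σ x)) = 0 := by
    rw [Finset.sum_sub_distrib, hA, hA, sub_self]
  rw [Fintype.sum_eq_add i k hik fun x hx => by
    simp [Equiv.swap_apply_of_ne_of_ne hx.1 hx.2]] at hdiff
  simp only [Equiv.Perm.mul_apply, Equiv.swap_apply_left, Equiv.swap_apply_right] at hdiff
  linarith

lemma sum_add_sum_apply_perm_eq_of_forall_sum_apply_perm_eq
    (hA : ∀ σ : Equiv.Perm ι, ∑ i, A i (σ i) = c) (σ : Equiv.Perm ι) (i : ι) :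
    ∑ j, A i j + ∑ k, A k (σ i) = Fintype.card ι * A i (σ i) + c := by
  have := Finset.sum_congr rfl fun k (_ : k ∈ Finset.univ) =>
    apply_perm_add_apply_perm_eq_of_forall_sum_apply_perm_eq hA σ i k
  rw [Finset.sum_add_distrib, Finset.sum_add_distrib, Equiv.sum_comp σ (A i), hA] at this
  simpa using this

end PermutationSums

lemma sum_sum_apply_perm_mul_addRight {n : ℕ} [NeZero n] (A : Matrix (Fin n) (Fin n) ℝ)
    (τ : Equiv.Perm (Fin n)) :
    ∑ k, ∑ i, A i ((τ * Equiv.addRight k : Equiv.Perm (Fin n)) i) = ∑ i, ∑ j, A i j := by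
  rw [Finset.sum_comm]
  exact Finset.sum_congr rfl fun i _ => Equiv.sum_comp ((Equiv.addLeft i).trans τ) (A i)

lemma one_dotProduct_transpose_mul_permMatrix_mulVec_one {n : ℕ} (A : Matrix (Fin n) (Fin n) ℝ)
    (σ : Equiv.Perm (Fin n)) :
    1 ⬝ᵥ ((Aᵀ * σ.permMatrix ℝ) *ᵥ 1) = ∑ i, ∑ j, A i j := by
  rw [← mulVec_mulVec, permMatrix_mulVec, Pi.one_comp, one_dotProduct]
  simp only [mulVec, dotProduct, transpose_apply, Pi.one_apply, mul_one]
  exact Finset.sum_comm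

section DistanceToPermMatrix

variable {n : ℕ} {A : Matrix (Fin n) (Fin n) ℝ} {σ : Equiv.Perm (Fin n)}

lemma trace_one_sub_transpose_mul_permMatrix_mul_le {H : Matrix (Fin n) (Fin n) ℝ}
    (hH : H ∈ orthogonalGroup (Fin n) ℝ) :
    trace ((1 - Aᵀ * σ.permMatrix ℝ) * H) ≤ schattenNorm 1 (A - σ.permMatrix ℝ) := by
  set P := σ.permMatrix ℝ
  have hP : Pᵀ * P = 1 := (mem_orthogonalGroup_iff' _ _).mp (permMatrix_mem_orthogonalGroup σ)
  have hQ : -(P * H) ∈ orthogonalGroup (Fin n) ℝ := by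
    rw [mem_orthogonalGroup_iff', transpose_neg, neg_mul_neg, transpose_mul, Matrix.mul_assoc,
      ← Matrix.mul_assoc Pᵀ, hP, Matrix.one_mul, (mem_orthogonalGroup_iff' _ _).mp hH]
  have hAQ : (A - P)ᵀ * -(P * H) = (1 - Aᵀ * P) * H := by
    rw [transpose_sub, mul_neg, sub_mul, sub_mul, ← Matrix.mul_assoc, ← Matrix.mul_assoc, hP,
      Matrix.one_mul, neg_sub]
  rw [← hAQ, schattenNorm]
  simpa using trace_transpose_mul_le_sum_singularValues (A - P) _ hQ

lemma one_le_sum_apply_perm (hσ : schattenNorm 1 (A - σ.permMatrix ℝ) = n - 1) :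
    1 ≤ ∑ i, A i (σ i) := by
  have := trace_one_sub_transpose_mul_permMatrix_mul_le (A := A) (σ := σ) (one_mem _)
  rw [Matrix.mul_one, trace_sub, trace_one, trace_transpose_mul_permMatrix, hσ,
    Fintype.card_fin] at this
  linarith

lemma two_mul_dotProduct_mulVec_le (hσ : schattenNorm 1 (A - σ.permMatrix ℝ) = n - 1)
    (u : Fin n → ℝ) :
    2 * (u ⬝ᵥ ((Aᵀ * σ.permMatrix ℝ) *ᵥ u)) ≤ (1 + ∑ i, A i (σ i)) * (u ⬝ᵥ u) := by
  rcases eq_or_ne u 0 with rfl | hu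
  · simp
  have huu : 0 < u ⬝ᵥ u := (Fintype.sum_nonneg fun i => mul_self_nonneg (u i)).lt_of_ne'
    (dotProduct_self_eq_zero.not.mpr hu)
  have := trace_one_sub_transpose_mul_permMatrix_mul_le (A := A) (σ := σ)
    (householder_mem_orthogonalGroup hu)
  rw [trace_mul_householder, trace_sub, trace_one, trace_transpose_mul_permMatrix, hσ,
    Fintype.card_fin, sub_mulVec, one_mulVec, dotProduct_sub, mul_sub,
    div_mul_cancel₀ _ huu.ne'] at this
  have key : 2 / (u ⬝ᵥ u) * (u ⬝ᵥ ((Aᵀ * σ.permMatrix ℝ) *ᵥ u)) ≤ 1 + ∑ i, A i (σ i) := by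
    linarith
  rwa [div_mul_eq_mul_div, div_le_iff₀ huu] at key

end DistanceToPermMatrix

def EquidistantFromPermMatrices {n : ℕ} (A : Matrix (Fin n) (Fin n) ℝ) : Prop :=
  ∀ σ : Equiv.Perm (Fin n), schattenNorm 1 (A - σ.permMatrix ℝ) = n - 1

namespace EquidistantFromPermMatrices

variable {n : ℕ} [NeZero n] {A : Matrix (Fin n) (Fin n) ℝ}

lemma sum_sum_eq (h : EquidistantFromPermMatrices A) : ∑ i, ∑ j, A i j = n := by
  have hfam := sum_sum_apply_perm_mul_addRight A 1
  have hn : (0 : ℝ) < n := by exact_mod_cast Nat.pos_of_neZero n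
  apply le_antisymm
  · have hle := Finset.sum_le_sum fun k (_ : k ∈ Finset.univ) =>
      two_mul_dotProduct_mulVec_le (h (1 * Equiv.addRight k)) 1
    simp only [one_dotProduct_transpose_mul_permMatrix_mulVec_one, one_dotProduct_one,
      Fintype.card_fin, ← Finset.sum_mul, Finset.sum_add_distrib, hfam, Finset.sum_const,
      Finset.card_univ, nsmul_eq_mul] at hle
    nlinarith
  · calc (n : ℝ) = ∑ k : Fin n, 1 := by simp
      _ ≤ ∑ k : Fin n, ∑ i, A i ((1 * Equiv.addRight k : Equiv.Perm (Fin n)) i) :=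
        Finset.sum_le_sum fun k _ => one_le_sum_apply_perm (h _)
      _ = ∑ i, ∑ j, A i j := hfam

lemma sum_apply_perm_eq_one (h : EquidistantFromPermMatrices A) (σ : Equiv.Perm (Fin n)) :
    ∑ i, A i (σ i) = 1 := by
  have hsum : ∑ k, (∑ i, A i ((σ * Equiv.addRight k : Equiv.Perm (Fin n)) i) - 1) = 0 := by
    rw [Finset.sum_sub_distrib, sum_sum_apply_perm_mul_addRight, h.sum_sum_eq]
    simp
  have := (Finset.sum_eq_zero_iff_of_nonneg fun k _ =>
    sub_nonneg.mpr (one_le_sum_apply_perm (h _))).mp hsum 0 (Finset.mem_univ _)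
  simpa [sub_eq_zero] using this

lemma sum_add_sum_apply_perm_eq_two (h : EquidistantFromPermMatrices A) (σ : Equiv.Perm (Fin n))
    (i : Fin n) :
    ∑ j, A i j + ∑ k, A k (σ i) = 2 := by
  set M := Aᵀ * σ.permMatrix ℝ - 1
  have hM : ∀ u, u ⬝ᵥ (M *ᵥ u) ≤ 0 := fun u => by
    have := two_mul_dotProduct_mulVec_le (h σ) u
    rw [h.sum_apply_perm_eq_one] at this
    simp only [M, sub_mulVec, one_mulVec, dotProduct_sub]
    linarith
  have h1 : (1 : Fin n → ℝ) ⬝ᵥ (M *ᵥ 1) = 0 := by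
    simp only [M, sub_mulVec, one_mulVec, dotProduct_sub,
      one_dotProduct_transpose_mul_permMatrix_mulVec_one, h.sum_sum_eq, one_dotProduct_one,
      Fintype.card_fin, sub_self]
  have := congrFun (add_transpose_mulVec_eq_zero_of_dotProduct_mulVec_nonpos hM h1) (σ i)
  rw [add_mulVec, transpose_sub, transpose_mul, transpose_permMatrix, transpose_one, sub_mulVec,
    sub_mulVec, ← mulVec_mulVec, ← mulVec_mulVec, permMatrix_mulVec, permMatrix_mulVec,
    Pi.one_comp, one_mulVec] at this
  simp only [mulVec, dotProduct, Pi.add_apply, Pi.sub_apply, Pi.one_apply, Pi.zero_apply,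
    Function.comp_apply, transpose_apply, mul_one, Equiv.Perm.coe_inv,
    Equiv.symm_apply_apply] at this
  linarith

end EquidistantFromPermMatrices

/-- For `n ≥ 2`, if `‖A − P‖_{S_1} = n − 1` for every permutation
matrix `P`, then `A = J_n`. -/
theorem equidistant_from_permMatrices_trace_norm {n : ℕ} (hn : 2 ≤ n)
    (A : Matrix (Fin n) (Fin n) ℝ)
    (h : ∀ σ : Equiv.Perm (Fin n), schattenNorm 1 (A - σ.permMatrix ℝ) = (n : ℝ) - 1) :
    A = matJ n := by
  have : NeZero n := ⟨by omega⟩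
  have h : EquidistantFromPermMatrices A := h
  ext i j
  have hcrit := h.sum_add_sum_apply_perm_eq_two (Equiv.swap i j) i
  have hexch := sum_add_sum_apply_perm_eq_of_forall_sum_apply_perm_eq h.sum_apply_perm_eq_one
    (Equiv.swap i j) i
  rw [Equiv.swap_apply_left] at hcrit hexch
  rw [Fintype.card_fin] at hexch
  exact eq_inv_of_mul_eq_one_right (by linarith)
end

section
/- Let ‖·‖ be any norm on the space of n × n real matrices that is permutation-invariant, i.e., ‖PAQ‖ = ‖A‖ for all n × n real matrices A and all permutation matrices P and Q. Then J_n is a Chebyshev center of Ω_n relative to (Ω_n, ‖·‖): the infimum over D ∈ Ω_n of max_{D' ∈ Ω_n} ‖D − D'‖ is attained at D = J_n, and the associated Chebyshev radius equals ‖J_n − I_n‖. -/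
/-! Every doubly stochastic matrix is a convex combination of permutation matrices (Birkhoff) and
a seminorm is convex, so the distance from any matrix `A` to `Ω_n` is attained at a permutation
matrix `P`. For `A = J_n` all these distances equal `‖J_n - I_n‖`, since `J_n - P = (J_n - I_n) P`.
Conversely, for any `D ∈ Ω_n`, averaging over the cyclic shifts `P_m` gives
`J_n - I_n = (1/n) ∑ₘ P_m (D - P_m⁻¹)`, so some permutation matrix is at distance at least
`‖J_n - I_n‖` from `D`. -/

open Matrix BigOperators

section Seminorm

variable {ι : Type*} [Fintype ι] [DecidableEq ι] (p : Seminorm ℝ (Matrix ι ι ℝ))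

theorem exists_seminorm_sub_le_seminorm_sub_permMatrix {D : Matrix ι ι ℝ}
    (hD : D ∈ doublyStochastic ℝ ι) (A : Matrix ι ι ℝ) :
    ∃ σ : Equiv.Perm ι, p (A - D) ≤ p (A - σ.permMatrix ℝ) := by
  rw [← SetLike.mem_coe, doublyStochastic_eq_convexHull_permMatrix] at hD
  obtain ⟨_, ⟨σ, rfl⟩, hσ⟩ :=
    (p.convexOn.translate_left (-A)).exists_ge_of_mem_convexHull (Set.subset_univ _) hD
  refine ⟨σ, ?_⟩
  simpa only [Function.comp_apply, ← sub_eq_add_neg, map_sub_rev p] using hσ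

theorem bddAbove_seminorm_sub_doublyStochastic (A : Matrix ι ι ℝ) :
    BddAbove {r : ℝ | ∃ D ∈ doublyStochastic ℝ ι, r = p (A - D)} := by
  obtain ⟨b, hb⟩ := (Set.finite_range fun σ : Equiv.Perm ι => p (A - σ.permMatrix ℝ)).bddAbove
  refine ⟨b, ?_⟩
  rintro _ ⟨D, hD, rfl⟩
  obtain ⟨σ, hσ⟩ := exists_seminorm_sub_le_seminorm_sub_permMatrix p hD A
  exact hσ.trans (hb ⟨σ, rfl⟩)

end Seminorm

section matJ

theorem matJ_mem_doublyStochastic (n : ℕ) : matJ n ∈ doublyStochastic ℝ (Fin n) := by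
  rw [mem_doublyStochastic_iff_sum]
  refine ⟨fun i j => by simp only [matJ, Matrix.of_apply]; positivity, fun i => ?_, fun j => ?_⟩
  · have hn : (n : ℝ) ≠ 0 := Nat.cast_ne_zero.2 (Fin.pos i).ne'
    simp [matJ, mul_inv_cancel₀ hn]
  · have hn : (n : ℝ) ≠ 0 := Nat.cast_ne_zero.2 (Fin.pos j).ne'
    simp [matJ, mul_inv_cancel₀ hn]

variable {n : ℕ}

theorem matJ_mul_permMatrix (σ : Equiv.Perm (Fin n)) : matJ n * σ.permMatrix ℝ = matJ n := by
  rw [Equiv.Perm.permMatrix, PEquiv.mul_toMatrix_toPEquiv]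
  ext i j
  simp [matJ]

theorem sum_permMatrix_addLeft_mul [NeZero n] {D : Matrix (Fin n) (Fin n) ℝ}
    (hD : D ∈ doublyStochastic ℝ (Fin n)) :
    ∑ m : Fin n, (Equiv.addLeft m).permMatrix ℝ * D = (n : ℝ) • matJ n := by
  ext i j
  have hcol : ∑ m : Fin n, D (m + i) j = 1 := by
    rw [Fintype.sum_equiv (Equiv.addRight i) (fun m => D (m + i) j) (fun k => D k j) fun _ => rfl]
    exact sum_col_of_mem_doublyStochastic hD j
  simp [Equiv.Perm.permMatrix, PEquiv.toMatrix_toPEquiv_mul, Matrix.sum_apply, matJ, hcol]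

theorem sum_permMatrix_addLeft_mul_sub_inv [NeZero n] {D : Matrix (Fin n) (Fin n) ℝ}
    (hD : D ∈ doublyStochastic ℝ (Fin n)) :
    ∑ m : Fin n, (Equiv.addLeft m).permMatrix ℝ * (D - (Equiv.addLeft m)⁻¹.permMatrix ℝ) =
      (n : ℝ) • (matJ n - 1) := by
  simp only [mul_sub, ← permMatrix_mul, inv_mul_cancel, permMatrix_one, Finset.sum_sub_distrib,
    sum_permMatrix_addLeft_mul hD, Finset.sum_const, Finset.card_univ, Fintype.card_fin,
    ← Nat.cast_smul_eq_nsmul ℝ, smul_sub]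

variable (p : Seminorm ℝ (Matrix (Fin n) (Fin n) ℝ))

theorem seminorm_matJ_sub_le (hright : ∀ A (σ : Equiv.Perm (Fin n)), p (A * σ.permMatrix ℝ) = p A)
    {D : Matrix (Fin n) (Fin n) ℝ} (hD : D ∈ doublyStochastic ℝ (Fin n)) :
    p (matJ n - D) ≤ p (matJ n - 1) := by
  obtain ⟨σ, hσ⟩ := exists_seminorm_sub_le_seminorm_sub_permMatrix p hD (matJ n)
  have hfactor : matJ n - σ.permMatrix ℝ = (matJ n - 1) * σ.permMatrix ℝ := by
    rw [sub_one_mul, matJ_mul_permMatrix]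
  rwa [hfactor, hright] at hσ

theorem exists_seminorm_matJ_sub_one_le_seminorm_sub_permMatrix
    (hleft : ∀ A (σ : Equiv.Perm (Fin n)), p (σ.permMatrix ℝ * A) = p A)
    {D : Matrix (Fin n) (Fin n) ℝ} (hD : D ∈ doublyStochastic ℝ (Fin n)) :
    ∃ σ : Equiv.Perm (Fin n), p (matJ n - 1) ≤ p (D - σ.permMatrix ℝ) := by
  rcases n.eq_zero_or_pos with rfl | hn
  · exact ⟨1, by simp [Subsingleton.elim (matJ 0 - 1) 0]⟩
  have : NeZero n := ⟨hn.ne'⟩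
  let z : Fin n → Matrix (Fin n) (Fin n) ℝ :=
    fun m => (Equiv.addLeft m).permMatrix ℝ * (D - (Equiv.addLeft m)⁻¹.permMatrix ℝ)
  have hcenter : Finset.univ.centerMass (fun _ => (1 : ℝ)) z = matJ n - 1 := by
    simp only [Finset.centerMass, one_smul, z, sum_permMatrix_addLeft_mul_sub_inv hD,
      Finset.sum_const, Finset.card_univ, Fintype.card_fin, nsmul_eq_mul, mul_one]
    rw [inv_smul_smul₀ (Nat.cast_ne_zero.2 hn.ne')]
  obtain ⟨m, -, hm⟩ := p.convexOn.exists_ge_of_centerMass (t := Finset.univ) (p := z)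
    (fun _ _ => zero_le_one) (by simpa using hn) fun _ _ => Set.mem_univ _
  rw [hcenter, hleft] at hm
  exact ⟨_, hm⟩

theorem sSup_seminorm_matJ_sub_doublyStochastic
    (hright : ∀ A (σ : Equiv.Perm (Fin n)), p (A * σ.permMatrix ℝ) = p A) :
    sSup {r : ℝ | ∃ D ∈ doublyStochastic ℝ (Fin n), r = p (matJ n - D)} = p (matJ n - 1) := by
  have h1 := (doublyStochastic ℝ (Fin n)).one_mem
  refine le_antisymm (csSup_le ⟨_, 1, h1, rfl⟩ ?_)
    (le_csSup (bddAbove_seminorm_sub_doublyStochastic p _) ⟨1, h1, rfl⟩)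
  rintro _ ⟨D, hD, rfl⟩
  exact seminorm_matJ_sub_le p hright hD

theorem seminorm_matJ_sub_one_le_sSup
    (hleft : ∀ A (σ : Equiv.Perm (Fin n)), p (σ.permMatrix ℝ * A) = p A)
    {D : Matrix (Fin n) (Fin n) ℝ} (hD : D ∈ doublyStochastic ℝ (Fin n)) :
    p (matJ n - 1) ≤ sSup {r : ℝ | ∃ D' ∈ doublyStochastic ℝ (Fin n), r = p (D - D')} := by
  obtain ⟨σ, hσ⟩ := exists_seminorm_matJ_sub_one_le_seminorm_sub_permMatrix p hleft hD
  exact hσ.trans (le_csSup (bddAbove_seminorm_sub_doublyStochastic p D)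
    ⟨_, permMatrix_mem_doublyStochastic, rfl⟩)

end matJ

theorem matJ_is_chebyshev_center_of_permInvariant_norm_general {n : ℕ}
    (N : Matrix (Fin n) (Fin n) ℝ → ℝ)
    (hadd : ∀ A B, N (A + B) ≤ N A + N B)
    (hsmul : ∀ (c : ℝ) (A), N (c • A) = |c| * N A)
    (hperm : ∀ (A : Matrix (Fin n) (Fin n) ℝ) (σ τ : Equiv.Perm (Fin n)),
      N (σ.permMatrix ℝ * A * τ.permMatrix ℝ) = N A) :
    (⨅ D : {M : Matrix (Fin n) (Fin n) ℝ // M ∈ doublyStochastic ℝ (Fin n)},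
        sSup {r : ℝ | ∃ D' ∈ doublyStochastic ℝ (Fin n), r = N (D.1 - D')}) =
        sSup {r : ℝ | ∃ D' ∈ doublyStochastic ℝ (Fin n), r = N (matJ n - D')} ∧
      sSup {r : ℝ | ∃ D' ∈ doublyStochastic ℝ (Fin n), r = N (matJ n - D')} =
        N (matJ n - 1) := by
  let p : Seminorm ℝ (Matrix (Fin n) (Fin n) ℝ) :=
    Seminorm.of N hadd fun c A => by rw [hsmul, Real.norm_eq_abs]
  have hleft : ∀ A (σ : Equiv.Perm (Fin n)), N (σ.permMatrix ℝ * A) = N A := fun A σ => by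
    simpa using hperm A σ 1
  have hright : ∀ A (σ : Equiv.Perm (Fin n)), N (A * σ.permMatrix ℝ) = N A := fun A σ => by
    simpa using hperm A 1 σ
  have hradius : sSup {r : ℝ | ∃ D' ∈ doublyStochastic ℝ (Fin n), r = N (matJ n - D')} =
      N (matJ n - 1) :=
    sSup_seminorm_matJ_sub_doublyStochastic p hright
  let J : {M : Matrix (Fin n) (Fin n) ℝ // M ∈ doublyStochastic ℝ (Fin n)} :=
    ⟨matJ n, matJ_mem_doublyStochastic n⟩
  have : Nonempty _ := ⟨J⟩
  refine ⟨le_antisymm ?_ ?_, hradius⟩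
  · refine ciInf_le ⟨N (matJ n - 1), ?_⟩ J
    rintro _ ⟨D, rfl⟩
    exact seminorm_matJ_sub_one_le_sSup p hleft D.2
  · rw [hradius]
    exact le_ciInf fun D => seminorm_matJ_sub_one_le_sSup p hleft D.2

/-- For any permutation-invariant norm `N` on `n × n` real matrices,
`J_n` is a Chebyshev center of `Ω_n` relative to `(Ω_n, N)` and the Chebyshev radius
equals `N (J_n − I_n)`. -/
theorem matJ_is_chebyshev_center_of_permInvariant_norm {n : ℕ}
    (N : Matrix (Fin n) (Fin n) ℝ → ℝ)
    (hadd : ∀ A B, N (A + B) ≤ N A + N B)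
    (hsmul : ∀ (c : ℝ) (A), N (c • A) = |c| * N A)
    (hdef : ∀ A, N A = 0 → A = 0)
    (hperm : ∀ (A : Matrix (Fin n) (Fin n) ℝ) (σ τ : Equiv.Perm (Fin n)),
      N (σ.permMatrix ℝ * A * τ.permMatrix ℝ) = N A) :
    (⨅ D : {M : Matrix (Fin n) (Fin n) ℝ // M ∈ doublyStochastic ℝ (Fin n)},
        sSup {r : ℝ | ∃ D' ∈ doublyStochastic ℝ (Fin n), r = N (D.1 - D')}) =
        sSup {r : ℝ | ∃ D' ∈ doublyStochastic ℝ (Fin n), r = N (matJ n - D')} ∧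
      sSup {r : ℝ | ∃ D' ∈ doublyStochastic ℝ (Fin n), r = N (matJ n - D')} =
        N (matJ n - 1) :=
  matJ_is_chebyshev_center_of_permInvariant_norm_general N hadd hsmul hperm
end

section
/- Let ‖·‖ be any norm on the space of n × n real matrices that is permutation-invariant, i.e., ‖PAQ‖ = ‖A‖ for all n × n real matrices A and all permutation matrices P and Q. If an n × n real matrix A is a Chebyshev center of Ω_n, i.e., max_{D ∈ Ω_n} ‖A − D‖ = inf over all n × n real matrices B of max_{D ∈ Ω_n} ‖B − D‖ =: R, then ‖A − P‖ = R for every permutation matrix P. -/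
open Matrix BigOperators

/-!
Write `R` for the Chebyshev radius and `P_σ` for permutation matrices. By Birkhoff's theorem
`Ω_n` is the convex hull of the `P_σ`, so the distance from `B` to the farthest point of `Ω_n` is
`max_σ N(B - P_σ)`; for the centre `A` every `N(A - P_σ)` is therefore at most `R`. Averaging the
left translates `P_σ A` gives a matrix whose distance to every `P_ρ` is at most the mean of the
`N(A - P_σ)`, so this mean is at least `R`, which forces each `N(A - P_σ)` to equal `R`.
-/

section

variable {n : Type*} [Fintype n] [DecidableEq n]

lemma exists_perm_seminorm_sub_le (p : Seminorm ℝ (Matrix n n ℝ)) (B : Matrix n n ℝ)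
    {D : Matrix n n ℝ} (hD : D ∈ doublyStochastic ℝ n) :
    ∃ σ : Equiv.Perm n, p (B - D) ≤ p (B - σ.permMatrix ℝ) := by
  have hconv : ConvexOn ℝ Set.univ fun X => p (B - X) := by
    have h : ConvexOn ℝ Set.univ (p ∘ fun X => X + -B) := p.convexOn.translate_left (-B)
    exact h.congr fun X _ => by simp [← sub_eq_add_neg, map_sub_rev p X B]
  rw [← SetLike.mem_coe, doublyStochastic_eq_convexHull_permMatrix] at hD
  obtain ⟨_, ⟨σ, rfl⟩, hσ⟩ := hconv.exists_ge_of_mem_convexHull (Set.subset_univ _) hD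
  exact ⟨σ, hσ⟩

lemma sSup_seminorm_sub_doublyStochastic_eq_iSup (p : Seminorm ℝ (Matrix n n ℝ))
    (B : Matrix n n ℝ) :
    sSup {r : ℝ | ∃ D ∈ doublyStochastic ℝ n, r = p (B - D)} =
      ⨆ σ : Equiv.Perm n, p (B - σ.permMatrix ℝ) := by
  have hbdd := Finite.bddAbove_range fun σ : Equiv.Perm n => p (B - σ.permMatrix ℝ)
  have hle : ∀ r ∈ {r : ℝ | ∃ D ∈ doublyStochastic ℝ n, r = p (B - D)},
      r ≤ ⨆ σ : Equiv.Perm n, p (B - σ.permMatrix ℝ) := by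
    rintro _ ⟨D, hD, rfl⟩
    obtain ⟨σ, hσ⟩ := exists_perm_seminorm_sub_le p B hD
    exact hσ.trans (le_ciSup hbdd σ)
  exact le_antisymm (csSup_le ⟨_, _, permMatrix_mem_doublyStochastic (σ := 1), rfl⟩ hle)
    (ciSup_le fun σ => le_csSup ⟨_, hle⟩ ⟨_, permMatrix_mem_doublyStochastic, rfl⟩)

noncomputable def permAverage (A : Matrix n n ℝ) : Matrix n n ℝ :=
  (Fintype.card (Equiv.Perm n) : ℝ)⁻¹ • ∑ σ : Equiv.Perm n, σ.permMatrix ℝ * A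

/-- `P_σ A - P_ρ = P_σ (A - P_{ρσ⁻¹})`, and `ρσ⁻¹` runs over all permutations with `σ`. -/
lemma seminorm_permAverage_sub_le (p : Seminorm ℝ (Matrix n n ℝ))
    (hp : ∀ (σ : Equiv.Perm n) X, p (σ.permMatrix ℝ * X) = p X) (A : Matrix n n ℝ)
    (ρ : Equiv.Perm n) :
    p (permAverage A - ρ.permMatrix ℝ) ≤
      (Fintype.card (Equiv.Perm n) : ℝ)⁻¹ * ∑ σ : Equiv.Perm n, p (A - σ.permMatrix ℝ) := by
  set c : ℝ := (Fintype.card (Equiv.Perm n) : ℝ)⁻¹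
  have hc : 0 ≤ c := by positivity
  have hmean : permAverage A - ρ.permMatrix ℝ =
      c • ∑ σ : Equiv.Perm n, σ.permMatrix ℝ * (A - (ρ * σ⁻¹).permMatrix ℝ) := by
    have hcard : c * (Fintype.card (Equiv.Perm n) : ℝ) = 1 := inv_mul_cancel₀ (by positivity)
    simp only [permAverage, Matrix.mul_sub, ← Matrix.permMatrix_mul, inv_mul_cancel_right,
      Finset.sum_sub_distrib, Finset.sum_const, Finset.card_univ, smul_sub,
      ← Nat.cast_smul_eq_nsmul ℝ, smul_smul, hcard, one_smul, c]
  calc p (permAverage A - ρ.permMatrix ℝ)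
      ≤ c * ∑ σ : Equiv.Perm n, p (σ.permMatrix ℝ * (A - (ρ * σ⁻¹).permMatrix ℝ)) := by
        rw [hmean, map_smul_eq_mul, Real.norm_of_nonneg hc]
        exact mul_le_mul_of_nonneg_left
          (Finset.le_sum_of_subadditive p (map_zero p).le (map_add_le_add p) _ _) hc
    _ = c * ∑ σ : Equiv.Perm n, p (A - σ.permMatrix ℝ) := by
        simp only [hp]
        congr 1
        exact Fintype.sum_equiv ((Equiv.inv _).trans (Equiv.mulLeft ρ)) _ _ fun σ => rfl

end

theorem chebyshev_center_equidistant_from_permMatrices_general {n : ℕ}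
    (N : Matrix (Fin n) (Fin n) ℝ → ℝ)
    (hadd : ∀ A B, N (A + B) ≤ N A + N B)
    (hsmul : ∀ (c : ℝ) (A), N (c • A) = |c| * N A)
    (hperm : ∀ (A : Matrix (Fin n) (Fin n) ℝ) (σ τ : Equiv.Perm (Fin n)),
      N (σ.permMatrix ℝ * A * τ.permMatrix ℝ) = N A)
    (A : Matrix (Fin n) (Fin n) ℝ)
    (hA : sSup {r : ℝ | ∃ D ∈ doublyStochastic ℝ (Fin n), r = N (A - D)} =
      ⨅ B : Matrix (Fin n) (Fin n) ℝ,
        sSup {r : ℝ | ∃ D ∈ doublyStochastic ℝ (Fin n), r = N (B - D)}) :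
    ∀ σ : Equiv.Perm (Fin n), N (A - σ.permMatrix ℝ) =
      ⨅ B : Matrix (Fin n) (Fin n) ℝ,
        sSup {r : ℝ | ∃ D ∈ doublyStochastic ℝ (Fin n), r = N (B - D)} := by
  let p : Seminorm ℝ (Matrix (Fin n) (Fin n) ℝ) :=
    Seminorm.of N hadd fun c X => by rw [hsmul, Real.norm_eq_abs]
  have hleft : ∀ (σ : Equiv.Perm (Fin n)) X, p (σ.permMatrix ℝ * X) = p X := fun σ X =>
    show N _ = N X by simpa using hperm X σ 1
  have hsup : ∀ B, sSup {r : ℝ | ∃ D ∈ doublyStochastic ℝ (Fin n), r = N (B - D)} =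
      ⨆ σ : Equiv.Perm (Fin n), p (B - σ.permMatrix ℝ) :=
    sSup_seminorm_sub_doublyStochastic_eq_iSup p
  simp only [hsup] at hA ⊢
  set R := ⨅ B : Matrix (Fin n) (Fin n) ℝ, ⨆ σ : Equiv.Perm (Fin n), p (B - σ.permMatrix ℝ)
  have hle : ∀ σ : Equiv.Perm (Fin n), p (A - σ.permMatrix ℝ) ≤ R := fun σ =>
    (le_ciSup (Finite.bddAbove_range _) σ).trans_eq hA
  have hR : R ≤ (Fintype.card (Equiv.Perm (Fin n)) : ℝ)⁻¹ *
      ∑ σ : Equiv.Perm (Fin n), p (A - σ.permMatrix ℝ) :=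
    (ciInf_le ⟨0, by rintro _ ⟨B, rfl⟩; exact Real.iSup_nonneg fun σ => apply_nonneg p _⟩
      (permAverage A)).trans (ciSup_le (seminorm_permAverage_sub_le p hleft A))
  have hsum : ∑ σ : Equiv.Perm (Fin n), p (A - σ.permMatrix ℝ) = ∑ _σ : Equiv.Perm (Fin n), R :=
    le_antisymm (Finset.sum_le_sum fun σ _ => hle σ) (by
      rw [Finset.sum_const, Finset.card_univ, nsmul_eq_mul]
      exact (le_inv_mul_iff₀ (by positivity)).1 hR)
  exact fun σ => (Finset.sum_eq_sum_iff_of_le fun σ _ => hle σ).1 hsum σ (Finset.mem_univ σ)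

/-- For any permutation-invariant norm `N`, if `A` is a Chebyshev
center of `Ω_n` (unconstrained), then `A` is equidistant (distance equal to the
Chebyshev radius `R`) from every permutation matrix. -/
theorem chebyshev_center_equidistant_from_permMatrices {n : ℕ}
    (N : Matrix (Fin n) (Fin n) ℝ → ℝ)
    (hadd : ∀ A B, N (A + B) ≤ N A + N B)
    (hsmul : ∀ (c : ℝ) (A), N (c • A) = |c| * N A)
    (hdef : ∀ A, N A = 0 → A = 0)
    (hperm : ∀ (A : Matrix (Fin n) (Fin n) ℝ) (σ τ : Equiv.Perm (Fin n)),
      N (σ.permMatrix ℝ * A * τ.permMatrix ℝ) = N A)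
    (A : Matrix (Fin n) (Fin n) ℝ)
    (hA : sSup {r : ℝ | ∃ D ∈ doublyStochastic ℝ (Fin n), r = N (A - D)} =
      ⨅ B : Matrix (Fin n) (Fin n) ℝ,
        sSup {r : ℝ | ∃ D ∈ doublyStochastic ℝ (Fin n), r = N (B - D)}) :
    ∀ σ : Equiv.Perm (Fin n), N (A - σ.permMatrix ℝ) =
      ⨅ B : Matrix (Fin n) (Fin n) ℝ,
        sSup {r : ℝ | ∃ D ∈ doublyStochastic ℝ (Fin n), r = N (B - D)} :=
  chebyshev_center_equidistant_from_permMatrices_general N hadd hsmul hperm A hA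
end
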